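/- arXiv:1807.05417 — 2 statements merged into one kernel-verified Lean document; each statement's English description precedes it below -/
import Mathlib

section
/- Let (X,d,m) be a metric measure space, p ∈ (1,∞), and let D be a D-structure on (X,d,m). Then for every u ∈ S^p(X) there exists a unique element Du ∈ D[u] ∩ L^p(m) (the minimal pseudo-gradient of u) such that E_p(u) = ‖Du‖_{L^p(m)}^p. -/
open Filter Set
open scoped ENNReal NNReal Topology

noncomputable section

namespace AxSob

variable {X : Type*} [MetricSpace X] [MeasurableSpace X]

/-- The quantity `∫_B |u|^p dm`. -/
def lpIntOn (m : MeasureTheory.Measure X) (p : ℝ) (u : X → ℝ) (B : Set X) : ℝ≥0∞ :=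
  ∫⁻ x in B, ENNReal.ofReal |u x| ^ p ∂m

/-- `u` belongs to `L^p(m)`. -/
def LpMem (m : MeasureTheory.Measure X) (p : ℝ) (u : X → ℝ) : Prop :=
  Measurable u ∧ lpIntOn m p u Set.univ < ∞

/-- `u` belongs to `L^p_loc(m)`: it is Borel and `p`-integrable on every bounded Borel set. -/
def LpLocMem (m : MeasureTheory.Measure X) (p : ℝ) (u : X → ℝ) : Prop :=
  Measurable u ∧ ∀ B : Set X, MeasurableSet B → Bornology.IsBounded B → lpIntOn m p u B < ∞

/-- Convergence in `L^p(m)`. -/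
def LpTendsto (m : MeasureTheory.Measure X) (p : ℝ) (g : ℕ → X → ℝ) (g₀ : X → ℝ) : Prop :=
  Tendsto (fun n => lpIntOn m p (fun x => g n x - g₀ x) Set.univ) atTop (𝓝 0)

/-- Convergence in `L^p_loc(m)`. -/
def LpLocTendsto (m : MeasureTheory.Measure X) (p : ℝ) (u : ℕ → X → ℝ) (u₀ : X → ℝ) : Prop :=
  ∀ B : Set X, MeasurableSet B → Bornology.IsBounded B →
    Tendsto (fun n => lpIntOn m p (fun x => u n x - u₀ x) B) atTop (𝓝 0)

/-- `u` belongs to `L^∞(m)`. -/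
def LinfMem (m : MeasureTheory.Measure X) (u : X → ℝ) : Prop :=
  Measurable u ∧ ∃ C : ℝ, ∀ᵐ x ∂m, |u x| ≤ C

/-- A `D`-structure (à la Gol'dshtein–Troyanov) on a metric measure space `(X, d, m)`,
with exponent `p`.  To every function `u` (thought of as an element of `L^p_loc(m)`) it
associates the family `D u` of its pseudo-gradients: non-negative Borel functions,
considered up to `m`-a.e. equality, satisfying the axioms A1–A5. -/
structure DStructure (X : Type*) [MetricSpace X] [MeasurableSpace X]
    (m : MeasureTheory.Measure X) (p : ℝ) where
  D : (X → ℝ) → Set (X → ℝ)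
  measurable_of_mem : ∀ u g, g ∈ D u → Measurable g
  nonneg_of_mem : ∀ u g, g ∈ D u → 0 ≤ g
  /-- `D` is defined on `L^p_loc(m)`, i.e. on `m`-a.e. equivalence classes. -/
  congr_ae : ∀ u v : X → ℝ, u =ᵐ[m] v → D u = D v
  /-- pseudo-gradients are considered up to `m`-a.e. equality. -/
  mem_congr_ae : ∀ u g h : X → ℝ, g ∈ D u → g =ᵐ[m] h → Measurable h → 0 ≤ h → h ∈ D u
  /-- A1 (non triviality). -/
  axiomA1 : ∀ (u : X → ℝ) (K : ℝ≥0), LpLocMem m p u → 0 ≤ u → LipschitzWith K u →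
    {x | 0 < u x}.indicator (fun _ => (K : ℝ)) ∈ D u
  /-- A2 (upper linearity). -/
  axiomA2 : ∀ (u₁ u₂ g₁ g₂ g : X → ℝ) (α₁ α₂ : ℝ),
    LpLocMem m p u₁ → LpLocMem m p u₂ → g₁ ∈ D u₁ → g₂ ∈ D u₂ →
    Measurable g → 0 ≤ g → (∀ᵐ x ∂m, |α₁| * g₁ x + |α₂| * g₂ x ≤ g x) →
    g ∈ D (fun x => α₁ * u₁ x + α₂ * u₂ x)
  /-- A3 (Leibniz rule). -/
  axiomA3 : ∀ (u g φ : X → ℝ) (K : ℝ≥0) (M : ℝ),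
    LpLocMem m p u → g ∈ D u → LipschitzWith K φ → (∀ x, |φ x| ≤ M) →
    (fun x => g x * M + (K : ℝ) * |u x|) ∈ D (fun x => φ x * u x)
  /-- A4 (lattice property). -/
  axiomA4 : ∀ u₁ u₂ g₁ g₂ : X → ℝ,
    LpLocMem m p u₁ → LpLocMem m p u₂ → g₁ ∈ D u₁ → g₂ ∈ D u₂ →
    (fun x => max (g₁ x) (g₂ x)) ∈ D (fun x => max (u₁ x) (u₂ x)) ∧
    (fun x => max (g₁ x) (g₂ x)) ∈ D (fun x => min (u₁ x) (u₂ x))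
  /-- A5 (completeness). -/
  axiomA5 : ∀ (u g : ℕ → X → ℝ) (u₀ g₀ : X → ℝ),
    (∀ n, LpLocMem m p (u n)) → (∀ n, g n ∈ D (u n)) → (∀ n, LpMem m p (g n)) →
    LpLocMem m p u₀ → Measurable g₀ → 0 ≤ g₀ →
    LpLocTendsto m p u u₀ → LpTendsto m p g g₀ → g₀ ∈ D u₀

namespace DStructure

variable {m : MeasureTheory.Measure X} {p : ℝ}

/-- The `p`-Dirichlet energy `E_p(u|B) = inf { ∫_B g^p dm : g ∈ D[u] }`. -/
def energyOn (S : DStructure X m p) (u : X → ℝ) (B : Set X) : ℝ≥0∞ :=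
  ⨅ (g : X → ℝ) (_ : g ∈ S.D u), lpIntOn m p g B

/-- The `p`-Dirichlet energy `E_p(u) = E_p(u|X)`. -/
def energy (S : DStructure X m p) (u : X → ℝ) : ℝ≥0∞ := S.energyOn u Set.univ

/-- The Sobolev class `S^p(X) = { u ∈ L^p_loc(m) : E_p(u) < ∞ }`. -/
def SobolevClass (S : DStructure X m p) : Set (X → ℝ) :=
  {u | LpLocMem m p u ∧ S.energy u < ∞}

/-- The Sobolev space `W^{1,p}(X) = L^p(m) ∩ S^p(X)`. -/
def W1p (S : DStructure X m p) : Set (X → ℝ) :=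
  {u | LpMem m p u ∧ S.energy u < ∞}

/-- The Sobolev norm `‖u‖ = (‖u‖_{L^p}^p + E_p(u))^{1/p}`. -/
def wNorm (S : DStructure X m p) (u : X → ℝ) : ℝ≥0∞ :=
  (lpIntOn m p u Set.univ + S.energy u) ^ (1 / p)

/-- `g` is the minimal pseudo-gradient of `u`: `g ∈ D[u] ∩ L^p(m)` and
`∫ g^p dm = E_p(u)`. -/
def IsMinimalPG (S : DStructure X m p) (u g : X → ℝ) : Prop :=
  g ∈ S.D u ∧ LpMem m p g ∧ lpIntOn m p g Set.univ = S.energy u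

/-- Property L1: if `u ∈ S^p(X)` is `m`-a.e. constant on a Borel set `B`, then
`E_p(u|B) = 0`. -/
def L1prop (S : DStructure X m p) : Prop :=
  ∀ u ∈ S.SobolevClass, ∀ B : Set X, MeasurableSet B →
    (∃ c : ℝ, ∀ᵐ x ∂(m.restrict B), u x = c) → S.energyOn u B = 0

/-- Property L2: if `u ∈ S^p(X)` is `m`-a.e. constant on a Borel set `B`, then the
minimal pseudo-gradient vanishes `m`-a.e. on `B`. -/
def L2prop (S : DStructure X m p) : Prop :=
  ∀ u ∈ S.SobolevClass, ∀ B : Set X, MeasurableSet B →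
    (∃ c : ℝ, ∀ᵐ x ∂(m.restrict B), u x = c) →
    ∀ g, S.IsMinimalPG u g → ∀ᵐ x ∂(m.restrict B), g x = 0

/-- Property L3: if `u ∈ S^p(X)` and `g ∈ D[u]`, then `χ_{u>0}·g ∈ D[u⁺]`. -/
def L3prop (S : DStructure X m p) : Prop :=
  ∀ u ∈ S.SobolevClass, ∀ g ∈ S.D u,
    {x | 0 < u x}.indicator g ∈ S.D (fun x => max (u x) 0)

/-- Property L4: if `u ∈ S^p(X)` and `g₁, g₂ ∈ D[u]`, then `min{g₁,g₂} ∈ D[u]`. -/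
def L4prop (S : DStructure X m p) : Prop :=
  ∀ u ∈ S.SobolevClass, ∀ g₁ ∈ S.D u, ∀ g₂ ∈ S.D u,
    (fun x => min (g₁ x) (g₂ x)) ∈ S.D u

/-- Property L5: the minimal pseudo-gradient satisfies `Du ≤ g` `m`-a.e. for every
`g ∈ D[u]`. -/
def L5prop (S : DStructure X m p) : Prop :=
  ∀ u ∈ S.SobolevClass, ∀ g, S.IsMinimalPG u g →
    ∀ h ∈ S.D u, ∀ᵐ x ∂m, g x ≤ h x

/-- A pointwise local `D`-structure: it satisfies L1 and L5. -/
def PointwiseLocal (S : DStructure X m p) : Prop := S.L1prop ∧ S.L5prop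

/-- Strong locality in the sense of Shanmugalingam. -/
def ShanmugalingamLocal (S : DStructure X m p) : Prop :=
  ∀ u₁ ∈ S.SobolevClass, ∀ u₂ ∈ S.SobolevClass, ∀ B : Set X, MeasurableSet B →
    (∀ᵐ x ∂(m.restrict B), u₁ x = u₂ x) →
    ∀ g₁ ∈ S.D u₁, ∀ g₂ ∈ S.D u₂,
      (fun x => B.indicator g₁ x + Bᶜ.indicator g₂ x) ∈ S.D u₂

/-- Strong locality in the sense of Timoshin. -/
def TimoshinLocal (S : DStructure X m p) : Prop :=
  ∀ u₁ ∈ S.SobolevClass, ∀ u₂ ∈ S.SobolevClass,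
    ∀ g₁ ∈ S.D u₁, ∀ g₂ ∈ S.D u₂,
      (fun x => {y | u₁ y < u₂ y}.indicator g₁ x + {y | u₂ y < u₁ y}.indicator g₂ x +
        {y | u₁ y = u₂ y}.indicator (fun y => min (g₁ y) (g₂ y)) x)
        ∈ S.D (fun x => min (u₁ x) (u₂ x))

end DStructure

end AxSob

/-!
`D[u] ∩ L^p(m)` is convex (A2 with `α₁ = α₂ = 1/2`) and closed in `L^p(m)` (A5 along the constant
sequence `u`), so the minimal pseudo-gradient is the element of least norm of a closed convex set.
It exists and is unique because `L^p` is uniformly convex for `1 < p < ∞`: for `p ≥ 2` by Clarkson's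
inequality, for `p < 2` by strong convexity of `t ↦ t ^ p` on bounded intervals combined with
Hölder's inequality. Uniform convexity makes every minimizing sequence Cauchy, and two minimizers
have a midpoint that is again admissible, which forces them to agree.
-/

open MeasureTheory

namespace AxSob

theorem rpow_add_div_two_le {p a b : ℝ} (hp : 1 ≤ p) (ha : 0 ≤ a) (hb : 0 ≤ b) :
    ((a + b) / 2) ^ p ≤ (a ^ p + b ^ p) / 2 := by
  have h := (convexOn_rpow hp).2 ha hb (by norm_num : (0 : ℝ) ≤ 1 / 2)
    (by norm_num : (0 : ℝ) ≤ 1 / 2) (by norm_num)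
  simp only [smul_eq_mul] at h
  calc ((a + b) / 2) ^ p = (1 / 2 * a + 1 / 2 * b) ^ p := by ring_nf
    _ ≤ 1 / 2 * a ^ p + 1 / 2 * b ^ p := h
    _ = (a ^ p + b ^ p) / 2 := by ring

/-- Clarkson's inequality. -/
theorem abs_half_sub_rpow_add_abs_half_add_rpow_le {p : ℝ} (hp : 2 ≤ p) (a b : ℝ) :
    |(a - b) / 2| ^ p + |(a + b) / 2| ^ p ≤ (|a| ^ p + |b| ^ p) / 2 := by
  have hp2 : 1 ≤ p / 2 := by linarith
  have hsq : ∀ c : ℝ, |c| ^ p = (c ^ 2) ^ (p / 2) := fun c => by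
    rw [← sq_abs, ← Real.rpow_natCast, ← Real.rpow_mul (abs_nonneg c)]
    ring_nf
  calc |(a - b) / 2| ^ p + |(a + b) / 2| ^ p
      = (((a - b) / 2) ^ 2) ^ (p / 2) + (((a + b) / 2) ^ 2) ^ (p / 2) := by rw [hsq, hsq]
    _ ≤ (((a - b) / 2) ^ 2 + ((a + b) / 2) ^ 2) ^ (p / 2) :=
      Real.add_rpow_le_rpow_add (sq_nonneg _) (sq_nonneg _) hp2
    _ = ((a ^ 2 + b ^ 2) / 2) ^ (p / 2) := by ring_nf
    _ ≤ ((a ^ 2) ^ (p / 2) + (b ^ 2) ^ (p / 2)) / 2 :=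
      rpow_add_div_two_le hp2 (sq_nonneg _) (sq_nonneg _)
    _ = (|a| ^ p + |b| ^ p) / 2 := by rw [hsq, hsq]

theorem convexOn_rpow_sub_mul_sq {p : ℝ} (hp1 : 1 ≤ p) (hp2 : p ≤ 2) (s : ℝ) :
    ConvexOn ℝ (Icc 0 s) fun t => t ^ p - p * (p - 1) * s ^ (p - 2) / 2 * t ^ 2 := by
  set K := p * (p - 1) * s ^ (p - 2)
  refine convexOn_of_hasDerivWithinAt2_nonneg (f' := fun t => p * t ^ (p - 1) - K * t)
    (f'' := fun t => p * (p - 1) * t ^ (p - 2) - K) (convex_Icc 0 s) ?_ ?_ ?_ ?_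
  · exact ((Real.continuous_rpow_const (by linarith)).sub
      (continuous_const.mul (continuous_pow 2))).continuousOn
  · intro t ht
    rw [interior_Icc] at ht
    refine ((Real.hasDerivAt_rpow_const (Or.inl ht.1.ne')).sub
      ((hasDerivAt_pow 2 t).const_mul (K / 2))).hasDerivWithinAt.congr_deriv ?_
    ring
  · intro t ht
    rw [interior_Icc] at ht
    refine (((Real.hasDerivAt_rpow_const (Or.inl ht.1.ne')).const_mul p).sub
      ((hasDerivAt_id t).const_mul K)).hasDerivWithinAt.congr_deriv ?_
    rw [show p - 1 - 1 = p - 2 by ring]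
    ring
  · intro t ht
    rw [interior_Icc] at ht
    have hst : s ^ (p - 2) ≤ t ^ (p - 2) := Real.rpow_le_rpow_of_nonpos ht.1 ht.2.le (by linarith)
    have hp : 0 ≤ p * (p - 1) := by nlinarith
    simp only [K]
    nlinarith

/-- Strong convexity of `t ↦ t ^ p` on `[0, a + b]`, where its second derivative is at least
`p (p - 1) (a + b) ^ (p - 2)`. -/
theorem mul_sub_sq_mul_rpow_add_rpow_add_div_two_le {p a b : ℝ} (hp1 : 1 ≤ p) (hp2 : p ≤ 2)
    (ha : 0 ≤ a) (hb : 0 ≤ b) :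
    p * (p - 1) / 8 * ((a - b) ^ 2 * (a + b) ^ (p - 2)) + ((a + b) / 2) ^ p
      ≤ (a ^ p + b ^ p) / 2 := by
  have h := (convexOn_rpow_sub_mul_sq hp1 hp2 (a + b)).2 (x := a) (y := b) ⟨ha, by linarith⟩
    ⟨hb, by linarith⟩ (by norm_num : (0 : ℝ) ≤ 1 / 2) (by norm_num : (0 : ℝ) ≤ 1 / 2) (by norm_num)
  simp only [smul_eq_mul] at h
  rw [show 1 / 2 * a + 1 / 2 * b = (a + b) / 2 by ring] at h
  linarith

theorem abs_sub_rpow_le {p a b : ℝ} (hp : 0 < p) (ha : 0 ≤ a) (hb : 0 ≤ b) :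
    |a - b| ^ p ≤ ((a - b) ^ 2 * (a + b) ^ (p - 2)) ^ (p / 2) * ((a + b) ^ p) ^ ((2 - p) / 2) := by
  rcases (add_nonneg ha hb).eq_or_lt with hs | hs
  · obtain rfl : a = 0 := by linarith
    obtain rfl : b = 0 := by linarith
    rw [sub_self, abs_zero, Real.zero_rpow hp.ne']
    positivity
  · rw [← sq_abs, Real.mul_rpow (by positivity) (by positivity), ← Real.rpow_natCast,
      ← Real.rpow_mul (abs_nonneg _), ← Real.rpow_mul hs.le, ← Real.rpow_mul hs.le, mul_assoc,
      ← Real.rpow_add hs]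
    ring_nf
    simp

theorem tendsto_nhds_zero_of_add_le {ι : Type*} {l : Filter ι} {a b : ι → ℝ≥0∞} {E : ℝ≥0∞}
    (hE : E ≠ ∞) (hb : Tendsto b l (𝓝 E)) (hab : ∀ i, a i + E ≤ b i) : Tendsto a l (𝓝 0) := by
  have hsub : Tendsto (fun i => b i - E) l (𝓝 0) := by
    simpa using ENNReal.Tendsto.sub hb tendsto_const_nhds (Or.inr hE)
  exact tendsto_of_tendsto_of_tendsto_of_le_of_le tendsto_const_nhds hsub (fun _ => zero_le)
    fun i => ENNReal.le_sub_of_add_le_right hE (hab i)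

section

variable {X : Type*} [MeasurableSpace X] {m : Measure X} {p : ℝ}

theorem lintegral_ofReal_add_le_of_forall {μ : Measure X} {φ ψ u v : X → ℝ} (hφ : Measurable φ)
    (hu : Measurable u) (hφ0 : 0 ≤ φ) (hψ0 : 0 ≤ ψ) (hu0 : 0 ≤ u) (hv0 : 0 ≤ v)
    (h : ∀ x, φ x + ψ x ≤ (u x + v x) / 2) :
    ∫⁻ x, ENNReal.ofReal (φ x) ∂μ + ∫⁻ x, ENNReal.ofReal (ψ x) ∂μ
      ≤ (∫⁻ x, ENNReal.ofReal (u x) ∂μ + ∫⁻ x, ENNReal.ofReal (v x) ∂μ) / 2 := by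
  rw [← lintegral_add_left hφ.ennreal_ofReal, ← lintegral_add_left hu.ennreal_ofReal,
    div_eq_mul_inv, ← lintegral_mul_const' _ _ (by simp)]
  refine lintegral_mono fun x => ?_
  rw [← ENNReal.ofReal_add (hφ0 x) (hψ0 x), ← ENNReal.ofReal_add (hu0 x) (hv0 x),
    ← div_eq_mul_inv, ← ENNReal.ofReal_ofNat 2, ← ENNReal.ofReal_div_of_pos two_pos]
  exact ENNReal.ofReal_le_ofReal (h x)

theorem lpIntOn_eq_lintegral_ofReal (hp : 0 ≤ p) (f : X → ℝ) (B : Set X) :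
    lpIntOn m p f B = ∫⁻ x in B, ENNReal.ofReal (|f x| ^ p) ∂m :=
  lintegral_congr fun _ => ENNReal.ofReal_rpow_of_nonneg (abs_nonneg _) hp

theorem lpIntOn_const_mul (hp : 0 ≤ p) (c : ℝ) (f : X → ℝ) (B : Set X) :
    lpIntOn m p (fun x => c * f x) B = ENNReal.ofReal (|c| ^ p) * lpIntOn m p f B := by
  rw [lpIntOn_eq_lintegral_ofReal hp, lpIntOn_eq_lintegral_ofReal hp,
    ← lintegral_const_mul' _ _ ENNReal.ofReal_ne_top]
  refine lintegral_congr fun x => ?_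
  rw [← ENNReal.ofReal_mul (by positivity), abs_mul, Real.mul_rpow (abs_nonneg _) (abs_nonneg _)]

theorem lpIntOn_mono (hp : 0 ≤ p) {f g : X → ℝ} (h : ∀ x, |f x| ≤ |g x|) (B : Set X) :
    lpIntOn m p f B ≤ lpIntOn m p g B :=
  lintegral_mono fun x => ENNReal.rpow_le_rpow (ENNReal.ofReal_le_ofReal (h x)) hp

theorem lpIntOn_half_sub_add_lpIntOn_half_add_le (hp : 2 ≤ p) {f h : X → ℝ} (hf : Measurable f)
    (hh : Measurable h) (B : Set X) :
    lpIntOn m p (fun x => (f x - h x) / 2) B + lpIntOn m p (fun x => (f x + h x) / 2) B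
      ≤ (lpIntOn m p f B + lpIntOn m p h B) / 2 := by
  simp only [lpIntOn_eq_lintegral_ofReal (show 0 ≤ p by linarith)]
  exact lintegral_ofReal_add_le_of_forall (by fun_prop) (by fun_prop) (fun x => by positivity)
    (fun x => by positivity) (fun x => by positivity) (fun x => by positivity)
    fun x => abs_half_sub_rpow_add_abs_half_add_rpow_le hp (f x) (h x)

theorem mul_lintegral_add_lpIntOn_half_add_le (hp1 : 1 ≤ p) (hp2 : p ≤ 2) {f h : X → ℝ}
    (hf : Measurable f) (hh : Measurable h) (hf0 : 0 ≤ f) (hh0 : 0 ≤ h) (B : Set X) :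
    ENNReal.ofReal (p * (p - 1) / 8) *
        ∫⁻ x in B, ENNReal.ofReal ((f x - h x) ^ 2 * (f x + h x) ^ (p - 2)) ∂m
      + lpIntOn m p (fun x => (f x + h x) / 2) B ≤ (lpIntOn m p f B + lpIntOn m p h B) / 2 := by
  have hc : 0 ≤ p * (p - 1) / 8 := by nlinarith
  have hq : ∀ x, 0 ≤ (f x - h x) ^ 2 * (f x + h x) ^ (p - 2) := fun x =>
    mul_nonneg (sq_nonneg _) (Real.rpow_nonneg (add_nonneg (hf0 x) (hh0 x)) _)
  rw [← lintegral_const_mul' _ _ ENNReal.ofReal_ne_top]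
  simp only [← ENNReal.ofReal_mul hc, lpIntOn_eq_lintegral_ofReal (show 0 ≤ p by linarith)]
  refine lintegral_ofReal_add_le_of_forall (by fun_prop) (by fun_prop)
    (fun x => mul_nonneg hc (hq x)) (fun x => by positivity) (fun x => by positivity)
    (fun x => by positivity) fun x => ?_
  simpa only [abs_of_nonneg (hf0 x), abs_of_nonneg (hh0 x),
    abs_of_nonneg (div_nonneg (add_nonneg (hf0 x) (hh0 x)) zero_le_two)]
    using mul_sub_sq_mul_rpow_add_rpow_add_div_two_le hp1 hp2 (hf0 x) (hh0 x)

theorem lpIntOn_sub_le (hp0 : 0 < p) (hp2 : p < 2) {f h : X → ℝ} (hf : Measurable f)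
    (hh : Measurable h) (hf0 : 0 ≤ f) (hh0 : 0 ≤ h) (B : Set X) :
    lpIntOn m p (fun x => f x - h x) B
      ≤ (∫⁻ x in B, ENNReal.ofReal ((f x - h x) ^ 2 * (f x + h x) ^ (p - 2)) ∂m) ^ (p / 2)
        * lpIntOn m p (fun x => f x + h x) B ^ ((2 - p) / 2) := by
  have hpq : (2 / p).HolderConjugate (2 / (2 - p)) := by
    rw [Real.holderConjugate_iff, inv_div, inv_div, ← add_div, one_lt_div hp0]
    constructor <;> [linarith; norm_num]
  have hHolder := ENNReal.lintegral_mul_le_Lp_mul_Lq (m.restrict B) hpq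
    (f := fun x => ENNReal.ofReal ((f x - h x) ^ 2 * (f x + h x) ^ (p - 2)) ^ (p / 2))
    (g := fun x => (ENNReal.ofReal |f x + h x| ^ p) ^ ((2 - p) / 2)) (by fun_prop) (by fun_prop)
  have hinv₁ : ∀ a : ℝ≥0∞, (a ^ (p / 2)) ^ (2 / p) = a := fun a => by
    rw [← ENNReal.rpow_mul, show p / 2 * (2 / p) = 1 by field_simp, ENNReal.rpow_one]
  have hinv₂ : ∀ a : ℝ≥0∞, (a ^ ((2 - p) / 2)) ^ (2 / (2 - p)) = a := fun a => by
    rw [← ENNReal.rpow_mul, show (2 - p) / 2 * (2 / (2 - p)) = 1 by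
      field_simp [show 2 - p ≠ 0 by linarith], ENNReal.rpow_one]
  simp only [Pi.mul_apply, hinv₁, hinv₂, one_div_div] at hHolder
  refine le_trans (lintegral_mono fun x => ?_) hHolder
  have hs : 0 ≤ f x + h x := add_nonneg (hf0 x) (hh0 x)
  rw [abs_of_nonneg hs, ENNReal.ofReal_rpow_of_nonneg (abs_nonneg _) hp0.le,
    ENNReal.ofReal_rpow_of_nonneg (by positivity) hp0.le, ENNReal.ofReal_rpow_of_nonneg
      (mul_nonneg (sq_nonneg _) (Real.rpow_nonneg hs _)) (by positivity),
    ENNReal.ofReal_rpow_of_nonneg (by positivity) (by linarith), ← ENNReal.ofReal_mul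
      (by positivity)]
  exact ENNReal.ofReal_le_ofReal (abs_sub_rpow_le hp0 (hf0 x) (hh0 x))

section UniformConvexity

variable {ι : Type*} {l : Filter ι} {E : ℝ≥0∞} {f h : ι → X → ℝ} {B : Set X}

theorem tendsto_lpIntOn_add_div_two (hfE : Tendsto (fun i => lpIntOn m p (f i) B) l (𝓝 E))
    (hhE : Tendsto (fun i => lpIntOn m p (h i) B) l (𝓝 E)) :
    Tendsto (fun i => (lpIntOn m p (f i) B + lpIntOn m p (h i) B) / 2) l (𝓝 E) := by
  simpa [ENNReal.add_halves, ENNReal.add_div] using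
    ENNReal.Tendsto.div_const (hfE.add hhE) (Or.inr two_ne_zero)

theorem tendsto_lpIntOn_sub_of_two_le (hp : 2 ≤ p) (hE : E ≠ ∞) (hf : ∀ i, Measurable (f i))
    (hh : ∀ i, Measurable (h i)) (hfE : Tendsto (fun i => lpIntOn m p (f i) B) l (𝓝 E))
    (hhE : Tendsto (fun i => lpIntOn m p (h i) B) l (𝓝 E))
    (hmid : ∀ i, E ≤ lpIntOn m p (fun x => (f i x + h i x) / 2) B) :
    Tendsto (fun i => lpIntOn m p (fun x => f i x - h i x) B) l (𝓝 0) := by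
  have hhalf : Tendsto (fun i => lpIntOn m p (fun x => (f i x - h i x) / 2) B) l (𝓝 0) :=
    tendsto_nhds_zero_of_add_le hE (tendsto_lpIntOn_add_div_two hfE hhE) fun i =>
      (add_le_add_right (hmid i) _).trans
        (lpIntOn_half_sub_add_lpIntOn_half_add_le hp (hf i) (hh i) B)
  have hscale : ∀ i, lpIntOn m p (fun x => f i x - h i x) B
      = ENNReal.ofReal (|2| ^ p) * lpIntOn m p (fun x => (f i x - h i x) / 2) B := fun i => by
    rw [← lpIntOn_const_mul (by linarith)]
    simp only [mul_div_cancel₀ _ (two_ne_zero' ℝ)]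
  simpa [hscale] using ENNReal.Tendsto.const_mul hhalf (Or.inr ENNReal.ofReal_ne_top)

theorem tendsto_lpIntOn_sub_of_lt_two (hp1 : 1 < p) (hp2 : p < 2) (hE : E ≠ ∞)
    (hf : ∀ i, Measurable (f i)) (hh : ∀ i, Measurable (h i)) (hf0 : ∀ i, 0 ≤ f i)
    (hh0 : ∀ i, 0 ≤ h i) (hfE : Tendsto (fun i => lpIntOn m p (f i) B) l (𝓝 E))
    (hhE : Tendsto (fun i => lpIntOn m p (h i) B) l (𝓝 E))
    (hmid : ∀ i, E ≤ lpIntOn m p (fun x => (f i x + h i x) / 2) B) :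
    Tendsto (fun i => lpIntOn m p (fun x => f i x - h i x) B) l (𝓝 0) := by
  set c := ENNReal.ofReal (p * (p - 1) / 8)
  have hc : c ≠ 0 := (ENNReal.ofReal_pos.2 (by nlinarith)).ne'
  set Q := fun i => ∫⁻ x in B, ENNReal.ofReal ((f i x - h i x) ^ 2 * (f i x + h i x) ^ (p - 2)) ∂m
  set avg := fun i => (lpIntOn m p (f i) B + lpIntOn m p (h i) B) / 2
  have havg : Tendsto avg l (𝓝 E) := tendsto_lpIntOn_add_div_two hfE hhE
  have hconvex := fun i => mul_lintegral_add_lpIntOn_half_add_le hp1.le hp2.le (hf i) (hh i)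
    (hf0 i) (hh0 i) (m := m) B
  have hcQ : Tendsto (fun i => c * Q i) l (𝓝 0) :=
    tendsto_nhds_zero_of_add_le hE havg fun i => (add_le_add_right (hmid i) _).trans (hconvex i)
  have hQ : Tendsto Q l (𝓝 0) := by
    simpa [← mul_assoc, ENNReal.inv_mul_cancel hc ENNReal.ofReal_ne_top] using
      ENNReal.Tendsto.const_mul hcQ (a := c⁻¹) (Or.inr (ENNReal.inv_ne_top.2 hc))
  have hsum : ∀ i, lpIntOn m p (fun x => f i x + h i x) B ≤ ENNReal.ofReal (2 ^ p) * avg i := by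
    intro i
    have hscale := lpIntOn_const_mul (m := m) (by linarith : 0 ≤ p) 2
      (fun x => (f i x + h i x) / 2) B
    simp only [mul_div_cancel₀ _ (two_ne_zero' ℝ), abs_two] at hscale
    exact hscale ▸ mul_le_mul_right (le_add_self.trans (hconvex i)) _
  have hbound : Tendsto (fun i => Q i ^ (p / 2) * (ENNReal.ofReal (2 ^ p) * avg i) ^ ((2 - p) / 2))
      l (𝓝 0) := by
    have hR := (ENNReal.Tendsto.const_mul havg (a := ENNReal.ofReal (2 ^ p))
      (Or.inr ENNReal.ofReal_ne_top)).ennrpow_const ((2 - p) / 2)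
    have hR_ne : (ENNReal.ofReal (2 ^ p) * E) ^ ((2 - p) / 2) ≠ ∞ :=
      ENNReal.rpow_ne_top_of_nonneg (by linarith) (ENNReal.mul_ne_top ENNReal.ofReal_ne_top hE)
    simpa [ENNReal.zero_rpow_of_pos (show 0 < p / 2 by linarith)] using
      ENNReal.Tendsto.mul (hQ.ennrpow_const (p / 2)) (Or.inr hR_ne) hR
        (Or.inr (ENNReal.rpow_ne_top_of_nonneg (by linarith) ENNReal.zero_ne_top))
  refine tendsto_of_tendsto_of_tendsto_of_le_of_le tendsto_const_nhds hbound (fun _ => zero_le)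
    fun i => (lpIntOn_sub_le (by linarith) hp2 (hf i) (hh i) (hf0 i) (hh0 i) B).trans ?_
  gcongr
  exact hsum i

/-- Uniform convexity of `L^p`. -/
theorem tendsto_lpIntOn_sub_of_le_lpIntOn_midpoint (hp : 1 < p) (hE : E ≠ ∞)
    (hf : ∀ i, Measurable (f i)) (hh : ∀ i, Measurable (h i)) (hf0 : ∀ i, 0 ≤ f i)
    (hh0 : ∀ i, 0 ≤ h i) (hfE : Tendsto (fun i => lpIntOn m p (f i) B) l (𝓝 E))
    (hhE : Tendsto (fun i => lpIntOn m p (h i) B) l (𝓝 E))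
    (hmid : ∀ i, E ≤ lpIntOn m p (fun x => (f i x + h i x) / 2) B) :
    Tendsto (fun i => lpIntOn m p (fun x => f i x - h i x) B) l (𝓝 0) := by
  rcases le_or_gt 2 p with hp2 | hp2
  · exact tendsto_lpIntOn_sub_of_two_le hp2 hE hf hh hfE hhE hmid
  · exact tendsto_lpIntOn_sub_of_lt_two hp hp2 hE hf hh hf0 hh0 hfE hhE hmid

end UniformConvexity

theorem lpIntOn_univ_eq_eLpNorm_rpow (hp : 0 < p) (f : X → ℝ) :
    lpIntOn m p f univ = eLpNorm f (ENNReal.ofReal p) m ^ p := by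
  rw [eLpNorm_eq_lintegral_rpow_enorm_toReal (by simpa using hp) ENNReal.ofReal_ne_top,
    ENNReal.toReal_ofReal hp.le, ← ENNReal.rpow_mul, one_div_mul_cancel hp.ne', ENNReal.rpow_one,
    lpIntOn, Measure.restrict_univ]
  simp only [Real.enorm_eq_ofReal_abs]

theorem LpMem.memLp (hp : 0 < p) {f : X → ℝ} (hf : LpMem m p f) :
    MemLp f (ENNReal.ofReal p) m := by
  refine ⟨hf.1.aestronglyMeasurable, lt_top_iff_ne_top.2 fun htop => ?_⟩
  have := hf.2
  rw [lpIntOn_univ_eq_eLpNorm_rpow hp, htop, ENNReal.top_rpow_of_pos hp] at this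
  exact lt_irrefl _ this

theorem tendsto_lpIntOn_univ_nhds_zero_iff (hp : 0 < p) {ι : Type*} {l : Filter ι}
    {f : ι → X → ℝ} :
    Tendsto (fun i => lpIntOn m p (f i) univ) l (𝓝 0)
      ↔ Tendsto (fun i => eLpNorm (f i) (ENNReal.ofReal p) m) l (𝓝 0) := by
  simp only [lpIntOn_univ_eq_eLpNorm_rpow hp]
  constructor <;> intro h
  · simpa [← ENNReal.rpow_mul, mul_inv_cancel₀ hp.ne', hp] using h.ennrpow_const (1 / p)
  · simpa [hp] using h.ennrpow_const p

theorem exists_lpTendsto_of_tendsto_lpIntOn_sub (hp : 1 ≤ p) {g : ℕ → X → ℝ}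
    (hg : ∀ n, LpMem m p (g n))
    (hcauchy : Tendsto (fun n : ℕ × ℕ => lpIntOn m p (fun x => g n.1 x - g n.2 x) univ) atTop
      (𝓝 0)) :
    ∃ g₀, Measurable g₀ ∧ LpTendsto m p g g₀ := by
  have hp0 : 0 < p := by linarith
  have : Fact (1 ≤ ENNReal.ofReal p) := ⟨ENNReal.one_le_ofReal.2 hp⟩
  have hmem := fun n => (hg n).memLp hp0
  set G : ℕ → Lp ℝ (ENNReal.ofReal p) m := fun n => (hmem n).toLp (g n)
  have hG : CauchySeq G := by
    rw [cauchySeq_iff_tendsto_dist_atTop_0]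
    simp only [G, Lp.dist_edist, Lp.edist_toLp_toLp]
    rw [← ENNReal.toReal_zero]
    exact (ENNReal.tendsto_toReal ENNReal.zero_ne_top).comp
      ((tendsto_lpIntOn_univ_nhds_zero_iff hp0).1 hcauchy)
  obtain ⟨g₀, hg₀⟩ := cauchySeq_tendsto_of_complete hG
  refine ⟨g₀, (Lp.stronglyMeasurable g₀).measurable, ?_⟩
  rw [Lp.tendsto_Lp_iff_tendsto_eLpNorm'] at hg₀
  refine (tendsto_lpIntOn_univ_nhds_zero_iff hp0).2 (hg₀.congr fun n => eLpNorm_congr_ae ?_)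
  filter_upwards [(hmem n).coeFn_toLp] with x hx
  simp only [G, Pi.sub_apply, hx]

theorem LpTendsto.max_zero (hp : 0 ≤ p) {g : ℕ → X → ℝ} {g₀ : X → ℝ} (hg : ∀ n, 0 ≤ g n)
    (h : LpTendsto m p g g₀) : LpTendsto m p g fun x => max (g₀ x) 0 := by
  refine tendsto_of_tendsto_of_tendsto_of_le_of_le tendsto_const_nhds h (fun _ => zero_le)
    fun n => lpIntOn_mono hp (fun x => ?_) univ
  calc |g n x - max (g₀ x) 0| = |max (g n x) 0 - max (g₀ x) 0| := by
        rw [max_eq_left (b := 0) (hg n x)]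
    _ ≤ |g n x - g₀ x| := abs_max_sub_max_le_abs _ _ _

theorem lpIntOn_univ_le_of_lpTendsto (hp : 1 ≤ p) {g : ℕ → X → ℝ} {g₀ : X → ℝ} {E : ℝ≥0∞}
    (hg : ∀ n, Measurable (g n)) (hg₀ : Measurable g₀) (h : LpTendsto m p g g₀)
    (hE : Tendsto (fun n => lpIntOn m p (g n) univ) atTop (𝓝 E)) :
    lpIntOn m p g₀ univ ≤ E := by
  have hp0 : 0 < p := by linarith
  set q := ENNReal.ofReal p
  have hnorm : Tendsto (fun n => eLpNorm (g n) q m) atTop (𝓝 (E ^ (1 / p))) := by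
    simpa [q, lpIntOn_univ_eq_eLpNorm_rpow hp0, ← ENNReal.rpow_mul, mul_inv_cancel₀ hp0.ne']
      using hE.ennrpow_const (1 / p)
  have hdist := (tendsto_lpIntOn_univ_nhds_zero_iff hp0).1 h
  have htri : ∀ n, eLpNorm g₀ q m ≤ eLpNorm (fun x => g n x - g₀ x) q m + eLpNorm (g n) q m :=
    fun n => by
      have := eLpNorm_sub_le (p := q) (μ := m) (hg n).aestronglyMeasurable
        ((hg n).sub hg₀).aestronglyMeasurable (ENNReal.one_le_ofReal.2 hp)
      rw [sub_sub_cancel, add_comm] at this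
      exact this
  have hle : eLpNorm g₀ q m ≤ E ^ (1 / p) := by
    simpa using ge_of_tendsto' (hdist.add hnorm) htri
  rw [lpIntOn_univ_eq_eLpNorm_rpow hp0]
  simpa [← ENNReal.rpow_mul, inv_mul_cancel₀ hp0.ne'] using
    ENNReal.rpow_le_rpow hle hp0.le

theorem ae_eq_of_lpIntOn_sub_eq_zero (hp : 0 < p) {f g : X → ℝ} (hf : Measurable f)
    (hg : Measurable g) (h : lpIntOn m p (fun x => f x - g x) univ = 0) : f =ᵐ[m] g := by
  rw [lpIntOn_univ_eq_eLpNorm_rpow hp, ENNReal.rpow_eq_zero_iff_of_pos hp,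
    eLpNorm_eq_zero_iff (f := fun x => f x - g x) (hf.sub hg).aestronglyMeasurable
      (by simpa using hp)] at h
  exact (sub_ae_eq_zero f g).1 h

end

namespace DStructure

variable {X : Type*} [MetricSpace X] [MeasurableSpace X] {m : Measure X} {p : ℝ}
  (S : DStructure X m p) {u : X → ℝ}

theorem energy_le_lpIntOn {g : X → ℝ} (hg : g ∈ S.D u) : S.energy u ≤ lpIntOn m p g univ :=
  iInf₂_le g hg

theorem add_div_two_mem (hu : LpLocMem m p u) {g₁ g₂ : X → ℝ} (h₁ : g₁ ∈ S.D u)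
    (h₂ : g₂ ∈ S.D u) : (fun x => (g₁ x + g₂ x) / 2) ∈ S.D u := by
  have hm : Measurable fun x => (g₁ x + g₂ x) / 2 :=
    ((S.measurable_of_mem u g₁ h₁).add (S.measurable_of_mem u g₂ h₂)).div_const 2
  have h₀ : (0 : X → ℝ) ≤ fun x => (g₁ x + g₂ x) / 2 := fun x =>
    div_nonneg (add_nonneg (S.nonneg_of_mem u g₁ h₁ x) (S.nonneg_of_mem u g₂ h₂ x)) zero_le_two
  have h := S.axiomA2 u u g₁ g₂ _ (1 / 2) (1 / 2) hu hu h₁ h₂ hm h₀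
    (Eventually.of_forall fun x => by norm_num; linarith)
  rwa [show (fun x => 1 / 2 * u x + 1 / 2 * u x) = u by ext; ring] at h

theorem exists_seq_tendsto_energy (hE : S.energy u ≠ ∞) :
    ∃ g : ℕ → X → ℝ, (∀ n, g n ∈ S.D u) ∧ (∀ n, LpMem m p (g n)) ∧
      Tendsto (fun n => lpIntOn m p (g n) univ) atTop (𝓝 (S.energy u)) := by
  have hex : ∀ n : ℕ, ∃ g ∈ S.D u, lpIntOn m p g univ < S.energy u + ((n : ℝ≥0∞) + 1)⁻¹ :=
    fun n => by
      have := ENNReal.lt_add_right hE (b := ((n : ℝ≥0∞) + 1)⁻¹) (by simp)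
      simpa only [energy, energyOn, iInf_lt_iff, exists_prop] using this
  choose g hgD hg using hex
  have hbound : Tendsto (fun n : ℕ => S.energy u + ((n : ℝ≥0∞) + 1)⁻¹) atTop
      (𝓝 (S.energy u)) := by
    simpa using tendsto_const_nhds.add
      (ENNReal.tendsto_inv_nat_nhds_zero.comp (tendsto_add_atTop_nat 1))
  refine ⟨g, hgD, fun n => ⟨S.measurable_of_mem u _ (hgD n), ?_⟩,
    tendsto_of_tendsto_of_tendsto_of_le_of_le tendsto_const_nhds hbound
      (fun n => S.energy_le_lpIntOn (hgD n)) fun n => (hg n).le⟩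
  exact (hg n).trans (ENNReal.add_lt_top.2 ⟨hE.lt_top, by simp⟩)

theorem mem_D_of_lpTendsto (hp : 0 < p) (hu : LpLocMem m p u) {g : ℕ → X → ℝ} {g₀ : X → ℝ}
    (hgD : ∀ n, g n ∈ S.D u) (hgL : ∀ n, LpMem m p (g n)) (hg₀ : Measurable g₀) (hg₀0 : 0 ≤ g₀)
    (h : LpTendsto m p g g₀) : g₀ ∈ S.D u :=
  S.axiomA5 (fun _ => u) g u g₀ (fun _ => hu) hgD hgL hu hg₀ hg₀0
    (fun _ _ _ => by simp [lpIntOn, ENNReal.zero_rpow_of_pos hp]) h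

theorem exists_isMinimalPG (hp : 1 < p) (hu : u ∈ S.SobolevClass) : ∃ g, S.IsMinimalPG u g := by
  obtain ⟨hloc, hE⟩ := hu
  obtain ⟨g, hgD, hgL, hgE⟩ := S.exists_seq_tendsto_energy hE.ne
  have hg0 := fun n => S.nonneg_of_mem u _ (hgD n)
  have hcauchy : Tendsto (fun n : ℕ × ℕ => lpIntOn m p (fun x => g n.1 x - g n.2 x) univ)
      atTop (𝓝 0) := by
    rw [← prod_atTop_atTop_eq]
    exact tendsto_lpIntOn_sub_of_le_lpIntOn_midpoint hp hE.ne (fun n => (hgL n.1).1)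
      (fun n => (hgL n.2).1) (fun n => hg0 n.1) (fun n => hg0 n.2) (hgE.comp tendsto_fst)
      (hgE.comp tendsto_snd) fun n =>
        S.energy_le_lpIntOn (S.add_div_two_mem hloc (hgD n.1) (hgD n.2))
  obtain ⟨g₀, hg₀, hlim⟩ := exists_lpTendsto_of_tendsto_lpIntOn_sub hp.le hgL hcauchy
  have hlim' := hlim.max_zero (by linarith) hg0
  have hg₀' : Measurable fun x => max (g₀ x) 0 := hg₀.max measurable_const
  have hD := S.mem_D_of_lpTendsto (by linarith) hloc hgD hgL hg₀' (fun x => le_max_right _ _) hlim'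
  have hle := lpIntOn_univ_le_of_lpTendsto hp.le (fun n => (hgL n).1) hg₀' hlim' hgE
  exact ⟨_, hD, ⟨hg₀', hle.trans_lt hE⟩, le_antisymm hle (S.energy_le_lpIntOn hD)⟩

variable {S} in
theorem IsMinimalPG.ae_eq (hp : 1 < p) (hu : LpLocMem m p u) {g g' : X → ℝ}
    (hg : S.IsMinimalPG u g) (hg' : S.IsMinimalPG u g') : g' =ᵐ[m] g := by
  obtain ⟨hgD, ⟨hgm, hgL⟩, hgE⟩ := hg
  obtain ⟨hg'D, ⟨hg'm, -⟩, hg'E⟩ := hg'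
  have hconst : Tendsto (fun _ : Unit => lpIntOn m p (fun x => g' x - g x) univ) ⊤ (𝓝 0) :=
    tendsto_lpIntOn_sub_of_le_lpIntOn_midpoint hp (hgE ▸ hgL.ne) (fun _ => hg'm) (fun _ => hgm)
      (fun _ => S.nonneg_of_mem u _ hg'D) (fun _ => S.nonneg_of_mem u _ hgD)
      (by rw [hg'E]; exact tendsto_const_nhds) (by rw [hgE]; exact tendsto_const_nhds)
      fun _ => S.energy_le_lpIntOn (S.add_div_two_mem hu hg'D hgD)
  exact ae_eq_of_lpIntOn_sub_eq_zero (by linarith) hg'm hgm (tendsto_const_nhds_iff.1 hconst)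

end DStructure

end AxSob

open AxSob AxSob.DStructure

theorem exists_unique_minimal_pseudo_gradient_general {X : Type*} [MetricSpace X] [MeasurableSpace X]
    (m : MeasureTheory.Measure X)
    (p : ℝ) (hp : 1 < p) (S : DStructure X m p)
    (u : X → ℝ) (hu : u ∈ S.SobolevClass) :
    ∃ g : X → ℝ, S.IsMinimalPG u g ∧
      ∀ g' : X → ℝ, S.IsMinimalPG u g' → g' =ᵐ[m] g := by
  obtain ⟨g, hg⟩ := S.exists_isMinimalPG hp hu
  exact ⟨g, hg, fun g' hg' => hg.ae_eq hp hu.1 hg'⟩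

/-- Existence and (`m`-a.e.) uniqueness of the minimal pseudo-gradient of a function
`u ∈ S^p(X)`, for `p ∈ (1,∞)`. -/
theorem exists_unique_minimal_pseudo_gradient {X : Type*} [MetricSpace X] [CompleteSpace X]
    [TopologicalSpace.SeparableSpace X] [MeasurableSpace X] [BorelSpace X]
    (m : MeasureTheory.Measure X) (hm : m ≠ 0)
    (hball : ∀ (x : X) (r : ℝ), m (Metric.ball x r) < ∞)
    (p : ℝ) (hp : 1 < p) (S : DStructure X m p)
    (u : X → ℝ) (hu : u ∈ S.SobolevClass) :
    ∃ g : X → ℝ, S.IsMinimalPG u g ∧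
      ∀ g' : X → ℝ, S.IsMinimalPG u g' → g' =ᵐ[m] g :=
  exists_unique_minimal_pseudo_gradient_general m p hp S u hu
end
end

section
/- Let (X,d,m) be a metric measure space, p ∈ (1,∞), and let D be a D-structure on (X,d,m) satisfying property L3. Then D satisfies property L2; that is, if B ⊆ X is Borel and u ∈ S^p(X) is m-a.e. constant on B, then the minimal pseudo-gradient Du vanishes m-a.e. on B. -/
open Filter Set
open scoped ENNReal NNReal Topology

noncomputable section

open AxSob AxSob.DStructure

/-! For `g ∈ D[u]` and any level `c`, applying L3 to `u - c` and to `c - u` and recombining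
with A2 through `v = v⁺ - (-v)⁺` shows that `χ_{u ≠ c} g ∈ D[u]`. If `g` is the minimal
pseudo-gradient, this smaller pseudo-gradient cannot have smaller energy, so it agrees with `g`
a.e., and hence `g` vanishes a.e. where `u = c`. -/

namespace AxSob

open MeasureTheory

variable {X : Type*} [MetricSpace X] [MeasurableSpace X] {m : Measure X} {p : ℝ}

theorem measure_lt_top_of_isBounded (hball : ∀ (x : X) (r : ℝ), m (Metric.ball x r) < ∞)
    {B : Set X} (hB : Bornology.IsBounded B) : m B < ∞ := by
  rcases B.eq_empty_or_nonempty with rfl | ⟨x, -⟩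
  · simp
  obtain ⟨r, hr⟩ := hB.subset_ball x
  exact (measure_mono hr).trans_lt (hball x r)

theorem lpLocMem_const (hball : ∀ (x : X) (r : ℝ), m (Metric.ball x r) < ∞) (hp : 0 ≤ p)
    (c : ℝ) : LpLocMem m p (fun _ => c) := by
  refine ⟨measurable_const, fun B _ hB => ?_⟩
  rw [lpIntOn, setLIntegral_const]
  exact ENNReal.mul_lt_top (ENNReal.rpow_lt_top_of_nonneg hp ENNReal.ofReal_ne_top)
    (measure_lt_top_of_isBounded hball hB)

theorem LpLocMem.of_abs_le {u v : X → ℝ} (hu : LpLocMem m p u) (hv : Measurable v)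
    (hp : 0 ≤ p) (hvu : ∀ x, |v x| ≤ |u x|) : LpLocMem m p v :=
  ⟨hv, fun B hBm hB => (lintegral_mono fun x =>
    ENNReal.rpow_le_rpow (ENNReal.ofReal_le_ofReal (hvu x)) hp).trans_lt (hu.2 B hBm hB)⟩

theorem LpLocMem.neg {u : X → ℝ} (hu : LpLocMem m p u) (hp : 0 ≤ p) :
    LpLocMem m p (fun x => -u x) :=
  hu.of_abs_le hu.1.neg hp fun x => (abs_neg (u x)).le

theorem LpLocMem.max_zero {u : X → ℝ} (hu : LpLocMem m p u) (hp : 0 ≤ p) :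
    LpLocMem m p (fun x => max (u x) 0) :=
  hu.of_abs_le (hu.1.max measurable_const) hp fun x => by
    rw [abs_of_nonneg (le_max_right _ _)]
    exact max_le (le_abs_self _) (abs_nonneg _)

theorem LpLocMem.add {u v : X → ℝ} (hu : LpLocMem m p u) (hv : LpLocMem m p v) (hp : 1 ≤ p) :
    LpLocMem m p (fun x => u x + v x) := by
  refine ⟨hu.1.add hv.1, fun B hBm hB => ?_⟩
  refine lt_of_le_of_lt (lintegral_mono fun x => ?_)
    (ENNReal.lintegral_rpow_add_lt_top_of_lintegral_rpow_lt_top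
      (hu.1.abs.ennreal_ofReal.aemeasurable) (hu.2 B hBm hB) (hv.2 B hBm hB) hp)
  refine ENNReal.rpow_le_rpow ?_ (zero_le_one.trans hp)
  rw [Pi.add_apply, ← ENNReal.ofReal_add (abs_nonneg _) (abs_nonneg _)]
  exact ENNReal.ofReal_le_ofReal (abs_add_le _ _)

namespace DStructure

variable (S : DStructure X m p)

theorem energy_le_of_D_subset {u v : X → ℝ} (h : S.D u ⊆ S.D v) : S.energy v ≤ S.energy u :=
  biInf_mono fun _ hg => h hg

theorem D_subset_D_neg {u : X → ℝ} (hu : LpLocMem m p u) :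
    S.D u ⊆ S.D (fun x => -u x) := fun g hg => by
  simpa using S.axiomA2 u u g g g (-1) 0 hu hu hg hg (S.measurable_of_mem _ _ hg)
    (S.nonneg_of_mem _ _ hg) (.of_forall fun x => by simp)

/-- The constant `1` has the zero pseudo-gradient by A1, so A2 lets `u + c = 1 • u + c • 1`
keep every pseudo-gradient of `u`. -/
theorem D_subset_D_add_const (hball : ∀ (x : X) (r : ℝ), m (Metric.ball x r) < ∞)
    (hp : 0 ≤ p) {u : X → ℝ} (hu : LpLocMem m p u) (c : ℝ) :
    S.D u ⊆ S.D (fun x => u x + c) := fun g hg => by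
  have h0 : (fun _ => (0 : ℝ)) ∈ S.D (fun _ => 1) := by
    simpa using S.axiomA1 (fun _ => 1) 0 (lpLocMem_const hball hp 1) (fun _ => zero_le_one)
      (LipschitzWith.const 1)
  simpa using S.axiomA2 u (fun _ => 1) g _ g 1 c hu (lpLocMem_const hball hp 1) hg h0
    (S.measurable_of_mem _ _ hg) (S.nonneg_of_mem _ _ hg) (.of_forall fun x => by simp)

theorem neg_mem_sobolevClass {u : X → ℝ} (hu : u ∈ S.SobolevClass) (hp : 0 ≤ p) :
    (fun x => -u x) ∈ S.SobolevClass :=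
  ⟨hu.1.neg hp, (S.energy_le_of_D_subset (S.D_subset_D_neg hu.1)).trans_lt hu.2⟩

theorem add_const_mem_sobolevClass (hball : ∀ (x : X) (r : ℝ), m (Metric.ball x r) < ∞)
    (hp : 1 ≤ p) {u : X → ℝ} (hu : u ∈ S.SobolevClass) (c : ℝ) :
    (fun x => u x + c) ∈ S.SobolevClass :=
  ⟨hu.1.add (lpLocMem_const hball (zero_le_one.trans hp) c) hp,
    (S.energy_le_of_D_subset
      (S.D_subset_D_add_const hball (zero_le_one.trans hp) hu.1 c)).trans_lt hu.2⟩

theorem indicator_ne_zero_mem_D (hL3 : S.L3prop) (hp : 0 ≤ p) {u g : X → ℝ}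
    (hu : u ∈ S.SobolevClass) (hg : g ∈ S.D u) : {x | u x ≠ 0}.indicator g ∈ S.D u := by
  have hpos := hL3 u hu g hg
  have hneg := hL3 _ (S.neg_mem_sobolevClass hu hp) g (S.D_subset_D_neg hu.1 hg)
  have hsum : {x | u x ≠ 0}.indicator g =
      fun x => {x | 0 < u x}.indicator g x + {x | 0 < -u x}.indicator g x := by
    funext x
    rcases lt_trichotomy (u x) 0 with h | h | h
    · simp [h, h.ne, not_lt_of_gt h]
    · simp [h]
    · simp [h, h.ne', not_lt_of_gt h]
  have hmeas : Measurable ({x | u x ≠ 0}.indicator g) :=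
    (S.measurable_of_mem _ _ hg).indicator (hu.1.1 (measurableSet_singleton 0).compl)
  have hnonneg : 0 ≤ {x | u x ≠ 0}.indicator g :=
    Set.indicator_nonneg fun x _ => S.nonneg_of_mem _ _ hg x
  simpa [max_zero_sub_max_neg_zero_eq_self, ← sub_eq_add_neg] using
    S.axiomA2 _ _ _ _ _ 1 (-1) (hu.1.max_zero hp) ((hu.1.neg hp).max_zero hp) hpos hneg hmeas
      hnonneg (.of_forall fun x => by rw [hsum]; simp)

theorem indicator_ne_const_mem_D (hL3 : S.L3prop)
    (hball : ∀ (x : X) (r : ℝ), m (Metric.ball x r) < ∞) (hp : 1 ≤ p) {u g : X → ℝ}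
    (hu : u ∈ S.SobolevClass) (hg : g ∈ S.D u) (c : ℝ) :
    {x | u x ≠ c}.indicator g ∈ S.D u := by
  have hp0 : 0 ≤ p := zero_le_one.trans hp
  have hv := S.add_const_mem_sobolevClass hball hp hu (-c)
  have hgv := S.D_subset_D_add_const hball hp0 hu.1 (-c) hg
  have hu_eq : u = fun x => (u x + -c) + c := by funext x; ring
  rw [hu_eq]
  simpa [← sub_eq_add_neg, sub_eq_zero] using
    S.D_subset_D_add_const hball hp0 hv.1 c (S.indicator_ne_zero_mem_D hL3 hp0 hv hgv)

theorem IsMinimalPG.ae_eq_of_le {S : DStructure X m p} {u g h : X → ℝ} (hp : 0 < p)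
    (hg : S.IsMinimalPG u g) (hh : h ∈ S.D u) (hhg : h ≤ g) : h =ᵐ[m] g := by
  have hh0 := S.nonneg_of_mem _ _ hh
  have hg0 := S.nonneg_of_mem _ _ hg.1
  have hpow_le : ∀ x, ENNReal.ofReal |h x| ^ p ≤ ENNReal.ofReal |g x| ^ p := fun x =>
    ENNReal.rpow_le_rpow (ENNReal.ofReal_le_ofReal (abs_le_abs_of_nonneg (hh0 x) (hhg x))) hp.le
  have hgh : lpIntOn m p g univ ≤ lpIntOn m p h univ := hg.2.2 ▸ biInf_le _ hh
  have hpow_eq : (fun x => ENNReal.ofReal |h x| ^ p) =ᵐ[m] fun x => ENNReal.ofReal |g x| ^ p :=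
    ae_eq_of_ae_le_of_lintegral_le (.of_forall hpow_le)
      ((lintegral_mono hpow_le).trans_lt (by simpa [lpIntOn] using hg.2.1.2)).ne
      ((S.measurable_of_mem _ _ hg.1).abs.ennreal_ofReal.pow_const p).aemeasurable
      (by simpa [lpIntOn] using hgh)
  filter_upwards [hpow_eq] with x hx
  rwa [(ENNReal.rpow_left_injective hp.ne').eq_iff,
    ENNReal.ofReal_eq_ofReal_iff (abs_nonneg _) (abs_nonneg _), abs_of_nonneg (hh0 x),
    abs_of_nonneg (hg0 x)] at hx

end DStructure

end AxSob

theorem L3_implies_L2_general {X : Type*} [MetricSpace X] [MeasurableSpace X]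
    (m : MeasureTheory.Measure X)
    (hball : ∀ (x : X) (r : ℝ), m (Metric.ball x r) < ∞)
    (p : ℝ) (hp : 1 < p) (S : DStructure X m p)
    (hL3 : S.L3prop) : S.L2prop := by
  rintro u hu B - ⟨c, hc⟩ g hg
  have heq : {x | u x ≠ c}.indicator g =ᵐ[m] g :=
    hg.ae_eq_of_le (zero_lt_one.trans hp) (S.indicator_ne_const_mem_D hL3 hball hp.le hu hg.1 c)
      (Set.indicator_le_self' fun x _ => S.nonneg_of_mem _ _ hg.1 x)
  filter_upwards [MeasureTheory.ae_restrict_of_ae heq, hc] with x hx hxc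
  rw [← hx, Set.indicator_of_notMem (by simpa using hxc)]

/-- Property L3 implies property L2. -/
theorem L3_implies_L2 {X : Type*} [MetricSpace X] [CompleteSpace X]
    [TopologicalSpace.SeparableSpace X] [MeasurableSpace X] [BorelSpace X]
    (m : MeasureTheory.Measure X) (hm : m ≠ 0)
    (hball : ∀ (x : X) (r : ℝ), m (Metric.ball x r) < ∞)
    (p : ℝ) (hp : 1 < p) (S : DStructure X m p)
    (hL3 : S.L3prop) : S.L2prop :=
  L3_implies_L2_general m hball p hp S hL3
end
end
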